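/- Let G be a non-nilpotent group of order p·q·r with primes p < q < r, and suppose G is K_{3,3}-free. Then the Sylow r-subgroup R is normal in G, G/R is cyclic of order pq, and any two distinct subgroups of G of order pq intersect trivially. -/

import Mathlib

/-!
Let `R` be a Sylow `r`-subgroup. Burnside's transfer theorem gives the Sylow `p`-subgroup a normal
complement of order `qr`, whose unique Sylow `r`-subgroup is characteristic, so `R` is normal.
If `G/R` (of order `pq`) were not cyclic it would have at least three Sylow `p`-subgroups; their
preimages `A₁, A₂, A₃` all meet `R`, the preimage of the Sylow `q`-subgroup of `G/R`, and a
Schur–Zassenhaus complement of `R`, which is a `K₃,₃`.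
Finally, a subgroup of order `pq` is a complement of `R`, hence cyclic, and has prime index `r`.
If two of them, `H ≠ K`, met nontrivially, `D = H ⊓ K` would be normalized by both, hence normal.
`H` is not normal (else `G ≅ R × H` is abelian), so it is self-normalizing and has `r ≥ 5`
conjugates; together with `D` these are `r + 1 ≥ 6` subgroups containing `D`, giving a `K₃,₃`.
-/

/-- The intersection graph of `G` contains no `K₃,₃` subgraph. -/
def IsK33Free (G : Type*) [Group G] : Prop :=
  ¬ ∃ A B : Fin 3 → Subgroup G,
      Function.Injective A ∧ Function.Injective B ∧
      (∀ i j, A i ≠ B j) ∧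
      (∀ i, A i ≠ ⊥ ∧ A i ≠ ⊤) ∧ (∀ i, B i ≠ ⊥ ∧ B i ≠ ⊤) ∧
      (∀ i j, A i ⊓ B j ≠ ⊥)

open Subgroup Pointwise Function

theorem Nat.minFac_mul_mul_eq {p q r : ℕ} (hp : p.Prime) (hq : q.Prime) (hr : r.Prime)
    (hpq : p ≤ q) (hpr : p ≤ r) : (p * q * r).minFac = p := by
  have hne : p * q * r ≠ 1 := fun h => hp.ne_one (mul_eq_one.mp (mul_eq_one.mp h).1).1
  refine le_antisymm (Nat.minFac_le_of_dvd hp.two_le (dvd_mul_of_dvd_left (dvd_mul_right p q) r))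
    ((Nat.le_minFac.mpr fun ℓ hℓ hdvd => ?_).resolve_left hne)
  rcases (Nat.Prime.dvd_mul hℓ).mp hdvd with h | h
  · rcases (Nat.Prime.dvd_mul hℓ).mp h with h | h
    · exact ((Nat.prime_dvd_prime_iff_eq hℓ hp).mp h).ge
    · exact ((Nat.prime_dvd_prime_iff_eq hℓ hq).mp h) ▸ hpq
  · exact ((Nat.prime_dvd_prime_iff_eq hℓ hr).mp h) ▸ hpr

theorem Nat.Prime.not_dvd_mul_of_lt {p q r : ℕ} (hr : r.Prime) (hp : 0 < p) (hq : 0 < q)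
    (hpr : p < r) (hqr : q < r) : ¬ r ∣ p * q := fun h =>
  (hr.dvd_mul.mp h).elim (fun h => (Nat.le_of_dvd hp h).not_gt hpr)
    (fun h => (Nat.le_of_dvd hq h).not_gt hqr)

section

variable {G : Type*} [Group G]

namespace Sylow

theorem card_eq_of_card_eq_mul [Finite G] {p a : ℕ} [hp : Fact p.Prime]
    (hG : Nat.card G = p * a) (ha : ¬ p ∣ a) (P : Sylow p G) : Nat.card P = p := by
  have ha0 : a ≠ 0 := by rintro rfl; exact ha (dvd_zero p)
  rw [P.card_eq_multiplicity, hG, Nat.factorization_mul hp.out.ne_zero ha0,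
    hp.out.factorization, Finsupp.add_apply, Nat.factorization_eq_zero_of_not_dvd ha]
  simp

theorem index_eq_of_card_eq_mul [Finite G] {p a : ℕ} [hp : Fact p.Prime]
    (hG : Nat.card G = p * a) (ha : ¬ p ∣ a) (P : Sylow p G) : P.index = a := by
  have := P.card_mul_index
  rw [P.card_eq_of_card_eq_mul hG ha, hG] at this
  exact Nat.eq_of_mul_eq_mul_left hp.out.pos this

theorem add_one_le_card_of_not_subsingleton [Finite G] {p : ℕ} [Fact p.Prime]
    (h : ¬ Subsingleton (Sylow p G)) : p + 1 ≤ Nat.card (Sylow p G) := by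
  have hne : Nat.card (Sylow p G) ≠ 1 := fun h1 => h (Nat.card_eq_one_iff_unique.mp h1).1
  have hpos : 0 < Nat.card (Sylow p G) := Nat.card_pos
  have hdvd := (Nat.modEq_iff_dvd' hpos).mp (card_sylow_modEq_one p G).symm
  have := Nat.le_of_dvd (by omega) hdvd
  omega

theorem subsingleton_of_card_eq_mul [Finite G] {s t : ℕ} [Fact s.Prime] (ht : t.Prime)
    (hts : t < s) (hG : Nat.card G = s * t) : Subsingleton (Sylow s G) := by
  by_contra h
  obtain ⟨P⟩ : Nonempty (Sylow s G) := inferInstance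
  have hdvd : Nat.card (Sylow s G) ∣ t :=
    P.index_eq_of_card_eq_mul hG (fun hdvd => (Nat.le_of_dvd ht.pos hdvd).not_gt hts) ▸
      P.card_dvd_index
  have := Nat.le_of_dvd ht.pos hdvd
  have := add_one_le_card_of_not_subsingleton h
  omega

theorem normal_of_subsingleton_of_normal [Finite G] {p : ℕ} [Fact p.Prime] {K : Subgroup G}
    [K.Normal] [Subsingleton (Sylow p K)] (hK : ¬ p ∣ K.index) (P : Sylow p G) :
    (P : Subgroup G).Normal := by
  let S : Sylow p K := default
  have hle : (S : Subgroup K).map K.subtype ≤ P :=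
    (S.isPGroup'.map K.subtype).le_sylow_of_normal P
  have hcard : Nat.card P ≤ Nat.card ((S : Subgroup K).map K.subtype) := by
    have hK0 : K.index ≠ 0 := K.index_ne_zero_of_finite
    rw [card_map_of_injective K.subtype_injective, P.card_eq_multiplicity, S.card_eq_multiplicity,
      ← K.card_mul_index, Nat.factorization_mul Nat.card_pos.ne' hK0, Finsupp.add_apply,
      Nat.factorization_eq_zero_of_not_dvd hK, add_zero]
  rw [← eq_of_le_of_card_ge hle hcard]
  infer_instance

end Sylow

namespace Subgroup

theorem eq_or_eq_top_of_le_of_index_prime {H K : Subgroup G} (hH : H.index.Prime)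
    (hHK : H ≤ K) : K = H ∨ K = ⊤ := by
  rw [← relIndex_mul_index hHK, Nat.prime_mul_iff] at hH
  rcases hH with ⟨-, h⟩ | ⟨-, h⟩
  · exact Or.inr (index_eq_one.mp h)
  · exact Or.inl (le_antisymm (relIndex_eq_one.mp h) hHK)

theorem ncard_orbit_conjAct (H : Subgroup G) :
    (MulAction.orbit (ConjAct G) H).ncard = (normalizer (H : Set G)).index := by
  have : normalizer (H : Set G) =
      (MulAction.stabilizer (ConjAct G) H).comap ConjAct.toConjAct.toMonoidHom := by
    ext g
    exact conjAct_pointwise_smul_iff.symm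
  rw [← MulAction.index_stabilizer, this]
  exact (index_comap_of_surjective _ ConjAct.toConjAct.surjective).symm

theorem normal_inf_of_index_prime {H K : Subgroup G} [IsMulCommutative H]
    [IsMulCommutative K] (hH : H.index.Prime) (hK : K.index.Prime) (hHK : H ≠ K) :
    (H ⊓ K).Normal := by
  have hle : ∀ L : Subgroup G, [IsMulCommutative L] → H ⊓ K ≤ L →
      L ≤ normalizer ((H ⊓ K : Subgroup G) : Set G) :=
    fun L _ hL => L.le_centralizer.trans ((centralizer_le hL).trans (centralizer_le_normalizer _))
  rw [← normalizer_eq_top_iff]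
  rcases eq_or_eq_top_of_le_of_index_prime hH (hle H inf_le_left) with h | h
  · rcases eq_or_eq_top_of_le_of_index_prime hK (hle K inf_le_right) with h' | h'
    · exact absurd (h.symm.trans h') hHK
    · exact h'
  · exact h

theorem isMulCommutative_of_isComplement' {N H : Subgroup G} [N.Normal] [H.Normal]
    [IsMulCommutative N] [IsMulCommutative H] (h : N.IsComplement' H) : IsMulCommutative G := by
  have hcomm := commute_of_normal_of_disjoint N H ‹_› ‹_› h.disjoint
  have hcenter : ∀ K : Subgroup G, N ≤ centralizer K → H ≤ centralizer K → K ≤ center G :=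
    fun K hN hH => by
      rw [← SetLike.coe_subset_coe, ← centralizer_eq_top_iff_subset, eq_top_iff, ← h.sup_eq_top]
      exact sup_le hN hH
  rw [← center_eq_top_iff, eq_top_iff, ← h.sup_eq_top]
  refine sup_le (hcenter N N.le_centralizer fun y hy x hx => ?_)
    (hcenter H (fun y hy x hx => ?_) H.le_centralizer)
  · exact (hcomm x y hx hy).eq
  · exact (hcomm y x hy hx).eq.symm

theorem IsComplement'.comap_mk'_inf_ne_bot {H N : Subgroup G} [N.Normal]
    (h : H.IsComplement' N) {W : Subgroup (G ⧸ N)} (hW : W ≠ ⊥) :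
    W.comap (QuotientGroup.mk' N) ⊓ H ≠ ⊥ := by
  obtain ⟨w, hw, hw1⟩ := W.bot_or_exists_ne_one.resolve_left hW
  let x := h.QuotientMulEquiv w
  have hx : ((x : G) : G ⧸ N) = w := h.QuotientMulEquiv.symm_apply_apply w
  intro hbot
  have hmem : (x : G) ∈ W.comap (QuotientGroup.mk' N) ⊓ H :=
    ⟨show ((x : G) : G ⧸ N) ∈ W from hx ▸ hw, x.2⟩
  rw [hbot, mem_bot] at hmem
  exact hw1 (by rw [← hx, hmem]; rfl)

end Subgroup

theorem Group.isNilpotent_of_isMulCommutative [IsMulCommutative G] : Group.IsNilpotent G :=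
  ⟨⟨1, upperCentralSeries_one_eq_top_iff.mpr ‹_›⟩⟩

theorem isCyclic_of_card_eq_mul [Finite G] {p q : ℕ} (hp : p.Prime) (hq : q.Prime) (hpq : p ≠ q)
    (hG : Nat.card G = p * q) [Subsingleton (Sylow p G)] [Subsingleton (Sylow q G)] :
    IsCyclic G := by
  have := Fact.mk hp
  have := Fact.mk hq
  let P : Sylow p G := default
  let Q : Sylow q G := default
  have hP : Nat.card P = p :=
    P.card_eq_of_card_eq_mul hG fun h => hpq ((Nat.prime_dvd_prime_iff_eq hp hq).mp h)
  have hQ : Nat.card Q = q :=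
    Q.card_eq_of_card_eq_mul (hG.trans (mul_comm p q))
      fun h => hpq ((Nat.prime_dvd_prime_iff_eq hq hp).mp h).symm
  have := isCyclic_of_prime_card hP
  have := isCyclic_of_prime_card hQ
  have := P.normal_of_subsingleton
  have := Q.normal_of_subsingleton
  have hcop : p.Coprime q := (Nat.coprime_primes hp hq).mpr hpq
  have hPQ : (P : Subgroup G).IsComplement' Q :=
    isComplement'_of_coprime (by rw [hP, hQ, hG]) (by rwa [hP, hQ])
  have : IsMulCommutative G := isMulCommutative_of_isComplement' hPQ
  have := Group.isNilpotent_of_isMulCommutative (G := G)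
  have := IsZGroup.of_squarefree (hG ▸ Nat.squarefree_mul_iff.mpr
    ⟨hcop, hp.prime.squarefree, hq.prime.squarefree⟩ : Squarefree (Nat.card G))
  -- a nilpotent group all of whose Sylow subgroups are cyclic is cyclic
  infer_instance

theorem not_isK33Free_of_inf_ne_bot {A B : Fin 3 → Subgroup G} (hA : Injective A)
    (hB : Injective B) (hAB : ∀ i j, A i ≠ B j) (hAtop : ∀ i, A i ≠ ⊤) (hBtop : ∀ j, B j ≠ ⊤)
    (hinf : ∀ i j, A i ⊓ B j ≠ ⊥) : ¬ IsK33Free G := fun hfree =>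
  hfree ⟨A, B, hA, hB, hAB,
    fun i => ⟨fun h => hinf i 0 (by rw [h, bot_inf_eq]), hAtop i⟩,
    fun j => ⟨fun h => hinf 0 j (by rw [h, inf_bot_eq]), hBtop j⟩, hinf⟩

theorem not_isK33Free_of_le {N : Subgroup G} (hN : N ≠ ⊥) {𝒮 : Set (Subgroup G)}
    (h𝒮 : 6 ≤ 𝒮.ncard) (hle : ∀ S ∈ 𝒮, N ≤ S) (htop : ⊤ ∉ 𝒮) : ¬ IsK33Free G := by
  have : Fintype 𝒮 := (Set.finite_of_ncard_pos (by omega)).fintype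
  obtain ⟨e⟩ : Nonempty (Fin 6 ↪ 𝒮) := Function.Embedding.nonempty_of_card_le
    (by rwa [Fintype.card_fin, ← Nat.card_eq_fintype_card, Nat.card_coe_set_eq])
  have hS : ∀ i, N ≤ e i := fun i => hle _ (e i).2
  have hinj : Injective fun i => (e i : Subgroup G) := Subtype.val_injective.comp e.injective
  refine not_isK33Free_of_inf_ne_bot (A := fun i => e (Fin.castAdd 3 i))
    (B := fun j => e (Fin.natAdd 3 j)) (hinj.comp (Fin.castAdd_injective 3 3))
    (hinj.comp (Fin.natAdd_injective 3 3)) (fun i j h => ?_) (fun i h => htop (h ▸ (e _).2))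
    (fun j h => htop (h ▸ (e _).2)) fun i j h => hN (le_bot_iff.mp (h ▸ le_inf (hS _) (hS _)))
  have := congrArg Fin.val (hinj h)
  simp at this
  omega

theorem not_isK33Free_of_normalizer_eq_self {H D : Subgroup G} [hDn : D.Normal] (hD : D ≠ ⊥)
    (hDH : D < H) (hH : normalizer (H : Set G) = H) (h5 : 5 ≤ H.index) : ¬ IsK33Free G := by
  set 𝒪 := MulAction.orbit (ConjAct G) H
  have h𝒪 : 𝒪.ncard = H.index := by rw [ncard_orbit_conjAct, hH]
  have hD𝒪 : D ∉ 𝒪 := by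
    rintro ⟨g, hg : g • H = D⟩
    have : H = D := by rw [← inv_smul_smul g H, hg, hDn.conjAct]
    exact hDH.ne this.symm
  refine not_isK33Free_of_le hD (𝒮 := insert D 𝒪) ?_ ?_ ?_
  · rw [Set.ncard_insert_of_notMem hD𝒪 (Set.finite_of_ncard_pos (by omega)), h𝒪]
    omega
  · rintro S (rfl | ⟨g, rfl⟩)
    · exact le_rfl
    · rw [← hDn.conjAct g]
      exact pointwise_smul_le_pointwise_smul_iff.mpr hDH.le
  · rintro (h | ⟨g, hg : g • H = ⊤⟩)
    · exact hDH.not_ge (h ▸ le_top)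
    · have : H = ⊤ := (eq_top_iff' H).mpr fun x =>
        smul_mem_pointwise_smul_iff.mp (hg ▸ mem_top (g • x))
      rw [this, index_top] at h5
      omega

theorem not_isK33Free_of_card_eq_mul {p q r : ℕ} (hp : p.Prime) (hq : q.Prime) (hr : r.Prime)
    (hpq : p < q) (hqr : q < r) (hG : Nat.card G = p * q * r) {A : Fin 3 → Subgroup G}
    (hA : Injective A) {R Q C : Subgroup G} (hAcard : ∀ i, Nat.card (A i) = r * p)
    (hR : Nat.card R = r) (hQ : Nat.card Q = r * q) (hC : Nat.card C = p * q)
    (hRA : ∀ i, R ≤ A i) (hRQ : R ≤ Q) (hAC : ∀ i, A i ⊓ C ≠ ⊥) : ¬ IsK33Free G := by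
  have hne {S T : Subgroup G} (h : Nat.card S ≠ Nat.card T) : S ≠ T := fun hST => h (hST ▸ rfl)
  have := hp.two_le
  have := hq.two_le
  have := hr.two_le
  have hRbot : R ≠ ⊥ := hne (by rw [hR, card_bot]; exact hr.one_lt.ne')
  refine not_isK33Free_of_inf_ne_bot (B := ![R, Q, C]) hA ?_ ?_ ?_ ?_ ?_
  · have hRQ : R ≠ Q := hne (by rw [hR, hQ]; intro h; nlinarith)
    have hRC : R ≠ C := hne (by
      rw [hR, hC]
      exact fun h => hr.not_dvd_mul_of_lt hp.pos hq.pos (hpq.trans hqr) hqr (h ▸ dvd_rfl))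
    have hQC : Q ≠ C := hne (by rw [hQ, hC]; intro h; nlinarith)
    simp only [Matrix.vecCons, Fin.cons_injective_iff]
    simp [hRQ, hRC, hQC, Injective]
  · intro i
    simp only [Fin.forall_fin_succ, Matrix.cons_val_zero, Matrix.cons_val_succ, IsEmpty.forall_iff,
      and_true]
    refine ⟨hne ?_, hne ?_, hne ?_⟩ <;> rw [hAcard] <;> [rw [hR]; rw [hQ]; rw [hC]] <;>
      intro h <;> nlinarith
  · exact fun i => hne (by rw [hAcard, card_top, hG]; intro h; nlinarith)
  · simp only [Fin.forall_fin_succ, Matrix.cons_val_zero, Matrix.cons_val_succ, IsEmpty.forall_iff,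
      and_true]
    refine ⟨hne ?_, hne ?_, hne ?_⟩ <;> rw [card_top, hG] <;> [rw [hR]; rw [hQ]; rw [hC]] <;>
      intro h <;> nlinarith
  · intro i
    simp only [Fin.forall_fin_succ, Matrix.cons_val_zero, Matrix.cons_val_succ, IsEmpty.forall_iff,
      and_true]
    exact ⟨fun h => hRbot (le_bot_iff.mp (h ▸ le_inf (hRA i) le_rfl)),
      fun h => hRbot (le_bot_iff.mp (h ▸ le_inf (hRA i) hRQ)), hAC i⟩

namespace Sylow

variable [Finite G] {p q r : ℕ}

theorem normal_of_card_eq_mul_mul (hp : p.Prime) (hq : q.Prime) (hr : r.Prime) (hpq : p < q)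
    (hqr : q < r) (hG : Nat.card G = p * q * r) (R : Sylow r G) : (R : Subgroup G).Normal := by
  have := Fact.mk hp
  have := Fact.mk hr
  let P : Sylow p G := default
  have hPcard : Nat.card P = p := by
    refine P.card_eq_of_card_eq_mul (hG.trans (mul_assoc p q r)) fun h => ?_
    rcases (Nat.Prime.dvd_mul hp).mp h with h | h
    · exact hpq.ne ((Nat.prime_dvd_prime_iff_eq hp hq).mp h)
    · exact (hpq.trans hqr).ne ((Nat.prime_dvd_prime_iff_eq hp hr).mp h)
  have hmin : (Nat.card G).minFac = p :=
    hG ▸ Nat.minFac_mul_mul_eq hp hq hr hpq.le (hpq.trans hqr).le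
  -- Burnside's transfer theorem
  obtain ⟨K, hKnormal, hK⟩ : ∃ K : Subgroup G, K.Normal ∧ K.IsComplement' P :=
    ⟨_, MonoidHom.normal_ker _, (isCyclic_of_prime_card hPcard).isComplement' hmin⟩
  have hKcard : Nat.card K = r * q := by
    have := hK.card_mul_card
    rw [hPcard, hG] at this
    exact Nat.eq_of_mul_eq_mul_right hp.pos (by rw [this]; ring)
  have := subsingleton_of_card_eq_mul hq hqr hKcard
  refine normal_of_subsingleton_of_normal (K := K) ?_ R
  rw [hK.symm.index_eq_card, hPcard]
  exact fun h => (hpq.trans hqr).ne ((Nat.prime_dvd_prime_iff_eq hr hp).mp h).symm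

theorem card_quotient_eq_mul (hp : p.Prime) (hq : q.Prime) (hr : r.Prime) (hpq : p < q)
    (hqr : q < r) (hG : Nat.card G = p * q * r) (R : Sylow r G) :
    Nat.card (G ⧸ (R : Subgroup G)) = p * q := by
  have := Fact.mk hr
  exact (index_eq_card _).symm.trans (R.index_eq_of_card_eq_mul (hG.trans (mul_comm _ _))
    (hr.not_dvd_mul_of_lt hp.pos hq.pos (hpq.trans hqr) hqr))

theorem not_isK33Free_of_three_le_card_sylow_quotient (hp : p.Prime) (hq : q.Prime)
    (hr : r.Prime) (hpq : p < q) (hqr : q < r) (hG : Nat.card G = p * q * r) (R : Sylow r G)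
    [(R : Subgroup G).Normal] (h3 : 3 ≤ Nat.card (Sylow p (G ⧸ (R : Subgroup G)))) :
    ¬ IsK33Free G := by
  have := Fact.mk hp
  have := Fact.mk hq
  have := Fact.mk hr
  have hG' : Nat.card G = r * (p * q) := hG.trans (mul_comm _ _)
  have hrpq := hr.not_dvd_mul_of_lt hp.pos hq.pos (hpq.trans hqr) hqr
  have hR : Nat.card R = r := R.card_eq_of_card_eq_mul hG' hrpq
  have hquot := R.card_quotient_eq_mul hp hq hr hpq hqr hG
  have := Fintype.ofFinite (Sylow p (G ⧸ (R : Subgroup G)))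
  obtain ⟨e⟩ : Nonempty (Fin 3 ↪ Sylow p (G ⧸ (R : Subgroup G))) :=
    Function.Embedding.nonempty_of_card_le (by rwa [Fintype.card_fin, ← Nat.card_eq_fintype_card])
  obtain ⟨C, hC⟩ := exists_right_complement'_of_coprime (N := (R : Subgroup G))
    (by rw [hR, R.index_eq_of_card_eq_mul hG' hrpq]; exact (hr.coprime_iff_not_dvd).mpr hrpq)
  have hCcard : Nat.card C = p * q := by
    have := hC.card_mul_card
    rw [hR, hG'] at this
    exact Nat.eq_of_mul_eq_mul_left hr.pos this
  let Q : Sylow q (G ⧸ (R : Subgroup G)) := default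
  set π := QuotientGroup.mk' (R : Subgroup G)
  have hcomap (W : Subgroup (G ⧸ (R : Subgroup G))) : Nat.card (W.comap π) = r * Nat.card W :=
    (QuotientGroup.card_preimage_mk _ W).trans (by rw [hR])
  have hRle (W : Subgroup (G ⧸ (R : Subgroup G))) : (R : Subgroup G) ≤ W.comap π :=
    (QuotientGroup.ker_mk' _).symm.le.trans (ker_le_comap _ _)
  refine not_isK33Free_of_card_eq_mul hp hq hr hpq hqr hG (A := fun i => (e i).comap π)
    (fun i j h => e.injective (Sylow.ext (comap_injective (QuotientGroup.mk'_surjective _) h)))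
    (fun i => ?_) hR (Q := (Q : Subgroup _).comap π) ?_ hCcard (fun i => hRle _) (hRle _)
    fun i => hC.symm.comap_mk'_inf_ne_bot ((e i).ne_bot_of_dvd_card (hquot ▸ dvd_mul_right p q))
  · rw [hcomap, (e i).card_eq_of_card_eq_mul hquot
      fun h => hpq.ne ((Nat.prime_dvd_prime_iff_eq hp hq).mp h)]
  · rw [hcomap, Q.card_eq_of_card_eq_mul (hquot.trans (mul_comm p q))
      fun h => hpq.ne ((Nat.prime_dvd_prime_iff_eq hq hp).mp h).symm]

theorem isCyclic_quotient_of_isK33Free (hp : p.Prime) (hq : q.Prime) (hr : r.Prime)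
    (hpq : p < q) (hqr : q < r) (hG : Nat.card G = p * q * r) (hfree : IsK33Free G)
    (R : Sylow r G) [(R : Subgroup G).Normal] : IsCyclic (G ⧸ (R : Subgroup G)) := by
  have := Fact.mk hp
  have := Fact.mk hq
  have hquot := R.card_quotient_eq_mul hp hq hr hpq hqr hG
  have := subsingleton_of_card_eq_mul hp hpq (hquot.trans (mul_comm p q))
  by_contra hnc
  refine R.not_isK33Free_of_three_le_card_sylow_quotient hp hq hr hpq hqr hG ?_ hfree
  exact (Nat.succ_le_succ hp.two_le).trans (add_one_le_card_of_not_subsingleton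
    fun _ => hnc (isCyclic_of_card_eq_mul hp hq hpq.ne hquot))

theorem inf_eq_bot_of_isK33Free (hp : p.Prime) (hq : q.Prime) (hr : r.Prime) (hpq : p < q)
    (hqr : q < r) (hG : Nat.card G = p * q * r) (hnil : ¬ Group.IsNilpotent G)
    (hfree : IsK33Free G) (R : Sylow r G) [(R : Subgroup G).Normal]
    [IsCyclic (G ⧸ (R : Subgroup G))] {H K : Subgroup G} (hH : Nat.card H = p * q)
    (hK : Nat.card K = p * q) (hHK : H ≠ K) : H ⊓ K = ⊥ := by
  have := Fact.mk hr
  have hrpq := hr.not_dvd_mul_of_lt hp.pos hq.pos (hpq.trans hqr) hqr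
  have hR : Nat.card R = r := R.card_eq_of_card_eq_mul (hG.trans (mul_comm _ _)) hrpq
  have hcompl {L : Subgroup G} (hL : Nat.card L = p * q) : L.IsComplement' R :=
    isComplement'_of_coprime (by rw [hL, hR, hG])
      (by rw [hL, hR]; exact ((hr.coprime_iff_not_dvd).mpr hrpq).symm)
  have hindex {L : Subgroup G} (hL : Nat.card L = p * q) : L.index = r := by
    rw [(hcompl hL).symm.index_eq_card, hR]
  have := isCyclic_of_surjective _ (hcompl hH).QuotientMulEquiv.surjective
  have := isCyclic_of_surjective _ (hcompl hK).QuotientMulEquiv.surjective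
  have := normal_inf_of_index_prime (hindex hH ▸ hr) (hindex hK ▸ hr) hHK
  by_contra hD
  rcases eq_or_eq_top_of_le_of_index_prime (hindex hH ▸ hr) le_normalizer with hN | hN
  · have hDH : H ⊓ K < H := inf_le_left.lt_of_ne fun h =>
      hHK (eq_of_le_of_card_ge (inf_eq_left.mp h) (by rw [hH, hK]))
    have h5 : 5 ≤ H.index := by
      rw [hindex hH]
      have : r ≠ 4 := by rintro rfl; norm_num at hr
      have := hp.two_le
      omega
    exact not_isK33Free_of_normalizer_eq_self hD hDH hN h5 hfree
  · have := normalizer_eq_top_iff.mp hN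
    have := isCyclic_of_prime_card hR
    have := isMulCommutative_of_isComplement' (hcompl hH).symm
    exact hnil Group.isNilpotent_of_isMulCommutative

end Sylow

end

/-- if `G` is a non-nilpotent `K₃,₃`-free group of order `pqr`
with primes `p < q < r`, then every Sylow `r`-subgroup `R` is normal, `G/R` is
cyclic of order `pq`, and any two distinct subgroups of order `pq` intersect
trivially. -/
theorem stmt_18 (G : Type*) [Group G] [Fintype G]
    (p q r : ℕ) (hp : p.Prime) (hq : q.Prime) (hr : r.Prime)
    (hpq : p < q) (hqr : q < r)
    (hcard : Fintype.card G = p * q * r)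
    (hnotnil : ¬ Group.IsNilpotent G) (hfree : IsK33Free G) :
    (∀ R : Sylow r G, (R : Subgroup G).Normal) ∧
    (∀ R : Sylow r G, ∀ [(R : Subgroup G).Normal],
        IsCyclic (G ⧸ (R : Subgroup G)) ∧
        Nat.card (G ⧸ (R : Subgroup G)) = p * q) ∧
    (∀ H K : Subgroup G, Nat.card H = p * q → Nat.card K = p * q →
        H ≠ K → H ⊓ K = ⊥) := by
  have hG : Nat.card G = p * q * r := Nat.card_eq_fintype_card.trans hcard
  have hnormal := Sylow.normal_of_card_eq_mul_mul hp hq hr hpq hqr hG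
  have hquot (R : Sylow r G) [(R : Subgroup G).Normal] :
      IsCyclic (G ⧸ (R : Subgroup G)) ∧ Nat.card (G ⧸ (R : Subgroup G)) = p * q :=
    ⟨R.isCyclic_quotient_of_isK33Free hp hq hr hpq hqr hG hfree,
      R.card_quotient_eq_mul hp hq hr hpq hqr hG⟩
  refine ⟨hnormal, hquot, fun H K hH hK hHK => ?_⟩
  have := Fact.mk hr
  let R : Sylow r G := default
  have := hnormal R
  have := (hquot R).1
  exact R.inf_eq_bot_of_isK33Free hp hq hr hpq hqr hG hnotnil hfree hH hK hHK
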